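/- arXiv:1809.06484 — 3 statements merged into one kernel-verified Lean document; each statement's English description precedes it below -/
import Mathlib

section
/- Let d ≥ 2 and let ν, ν′ be Borel probability measures on the real projective space P^{d−1}. Then the set {A ∈ SL_d(ℝ) : A_*ν = ν′} has empty interior in SL_d(ℝ). -/
open MeasureTheory Topology
open scoped NNReal ENNReal

noncomputable section

attribute [local instance] Matrix.normedAddCommGroup

/-- Euclidean space `ℝ^d`. -/
abbrev Ed (d : ℕ) := EuclideanSpace ℝ (Fin d)

/-- Real projective space `P^{d-1}` of lines through the origin in `ℝ^d`. -/
abbrev PSp (d : ℕ) := Projectivization ℝ (Ed d)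

instance (d : ℕ) : TopologicalSpace (PSp d) :=
  inferInstanceAs (TopologicalSpace (Quotient (projectivizationSetoid ℝ (Ed d))))

instance (d : ℕ) : MeasurableSpace (PSp d) := borel _
instance (d : ℕ) : BorelSpace (PSp d) := ⟨rfl⟩

/-- The action of a matrix on projective space, induced by the associated linear map
(junk value `id` if the linear map is not injective). -/
noncomputable def projAct {d : ℕ} (A : Matrix (Fin d) (Fin d) ℝ) : PSp d → PSp d :=
  haveI := Classical.propDecidable (Function.Injective (Matrix.toEuclideanLin A))
  if h : Function.Injective (Matrix.toEuclideanLin A) then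
    Projectivization.map (Matrix.toEuclideanLin A) h
  else id

namespace Stmt9

variable {d : ℕ}

lemma L_mul (A B : Matrix (Fin d) (Fin d) ℝ) :
    Matrix.toEuclideanLin (A * B) =
      (Matrix.toEuclideanLin A).comp (Matrix.toEuclideanLin B) := by
  simp [Matrix.toEuclideanLin_eq_toLin, Matrix.toLin_mul _ (PiLp.basisFun 2 ℝ (Fin d)) _]

lemma L_one : Matrix.toEuclideanLin (1 : Matrix (Fin d) (Fin d) ℝ) = LinearMap.id := by
  simp [Matrix.toEuclideanLin_eq_toLin]

lemma L_inj {A : Matrix (Fin d) (Fin d) ℝ} (hA : A.det = 1) :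
    Function.Injective (Matrix.toEuclideanLin A) := by
  have hu : IsUnit A.det := by simp [hA]
  have h := Matrix.nonsing_inv_mul A hu
  have : (Matrix.toEuclideanLin A⁻¹).comp (Matrix.toEuclideanLin A) = LinearMap.id := by
    rw [← L_mul, h, L_one]
  intro x y hxy
  have hx := LinearMap.congr_fun this x
  have hy := LinearMap.congr_fun this y
  simp only [LinearMap.coe_comp, Function.comp_apply, LinearMap.id_coe, id_eq] at hx hy
  rw [← hx, ← hy, hxy]


lemma projAct_eq {A : Matrix (Fin d) (Fin d) ℝ} (hA : A.det = 1) :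
    projAct A = Projectivization.map (Matrix.toEuclideanLin A) (L_inj hA) := by
  rw [projAct, dif_pos (L_inj hA)]

lemma toEuclideanLin_ne_zero {A : Matrix (Fin d) (Fin d) ℝ} (hA : A.det = 1)
    {v : Ed d} (hv : v ≠ 0) : Matrix.toEuclideanLin A v ≠ 0 := by
  intro h
  exact hv (L_inj hA (by simpa using h))

lemma projAct_mk {A : Matrix (Fin d) (Fin d) ℝ} (hA : A.det = 1) (v : Ed d) (hv : v ≠ 0) :
    projAct A (Projectivization.mk ℝ v hv) =
      Projectivization.mk ℝ (Matrix.toEuclideanLin A v) (toEuclideanLin_ne_zero hA hv) := by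
  rw [projAct_eq hA, Projectivization.map_mk]

lemma projAct_mul {A B : Matrix (Fin d) (Fin d) ℝ} (hA : A.det = 1) (hB : B.det = 1) :
    projAct (A * B) = projAct A ∘ projAct B := by
  have hAB : (A * B).det = 1 := by simp [Matrix.det_mul, hA, hB]
  funext x
  induction x using Projectivization.ind with
  | h v hv =>
    rw [Function.comp_apply, projAct_mk hAB, projAct_mk hB, projAct_mk hA]
    have hLv : Matrix.toEuclideanLin (A * B) v
        = Matrix.toEuclideanLin A (Matrix.toEuclideanLin B v) :=
      LinearMap.congr_fun (L_mul A B) v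
    rw [Projectivization.mk_eq_mk_iff']
    exact ⟨1, by simp [hLv]⟩

lemma continuous_projAct {A : Matrix (Fin d) (Fin d) ℝ} (hA : A.det = 1) :
    Continuous (projAct A) := by
  rw [projAct_eq hA]
  unfold Projectivization.map
  apply Continuous.quotient_map'
  exact Continuous.subtype_mk
    ((Matrix.toEuclideanLin A).continuous_of_finiteDimensional.comp continuous_subtype_val) _

lemma measurable_projAct {A : Matrix (Fin d) (Fin d) ℝ} (hA : A.det = 1) :
    Measurable (projAct A) := (continuous_projAct hA).measurable


lemma single_ne_zero' (i : Fin d) : (EuclideanSpace.single i (1:ℝ) : Ed d) ≠ 0 := by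
  intro h
  have := congrFun (congrArg (fun v : Ed d => (v : Fin d → ℝ)) h) i
  simp [EuclideanSpace.single_apply] at this

/-- the point `[e_i]` of projective space -/
def pt (i : Fin d) : PSp d := Projectivization.mk ℝ (EuclideanSpace.single i 1) (single_ne_zero' i)

private lemma lift_compat (F : Ed d → ℝ) (hF2 : ∀ (t : ℝ) (v : Ed d), F (t • v) = t^2 • F v) :
    ∀ (a b : { v : Ed d // v ≠ 0 }) (t : ℝ), (a : Ed d) = t • (b : Ed d) →
      (fun w : { v : Ed d // v ≠ 0 } => F w.1 / ‖w.1‖^2) a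
        = (fun w : { v : Ed d // v ≠ 0 } => F w.1 / ‖w.1‖^2) b := by
  rintro ⟨a, ha⟩ ⟨b, hb⟩ t hab
  simp only [Subtype.coe_mk] at hab ⊢
  subst hab
  have ht : t ≠ 0 := by rintro rfl; simp at ha
  have hbn : ‖b‖ ≠ 0 := norm_ne_zero_iff.mpr hb
  rw [hF2, norm_smul, mul_pow, smul_eq_mul, Real.norm_eq_abs, sq_abs,
    mul_div_mul_left _ _ (by positivity : t^2 ≠ 0)]

/-- squared `i`-th coordinate, normalized: a well-defined continuous function on `P^{d-1}`. -/
def coordSq (i : Fin d) : PSp d → ℝ :=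
  Projectivization.lift (fun w : { v : Ed d // v ≠ 0 } => (w.1 i)^2 / ‖w.1‖^2)
    (lift_compat (fun v => (v i)^2) (by intro t v; simp only [PiLp.smul_apply, smul_eq_mul]; ring))

/-- normalized product of coordinates `i` and `j`. -/
def rho (i j : Fin d) : PSp d → ℝ :=
  Projectivization.lift (fun w : { v : Ed d // v ≠ 0 } => (w.1 i * w.1 j) / ‖w.1‖^2)
    (lift_compat (fun v => v i * v j) (by intro t v; simp only [PiLp.smul_apply, smul_eq_mul]; ring))

lemma continuous_coordSq (i : Fin d) : Continuous (coordSq i) := by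
  apply Continuous.quotient_lift
  have h1 : Continuous fun w : { v : Ed d // v ≠ 0 } => w.1 i :=
    (EuclideanSpace.proj i).continuous.comp continuous_subtype_val
  have h2 : Continuous fun w : { v : Ed d // v ≠ 0 } => ‖w.1‖^2 :=
    (continuous_norm.comp continuous_subtype_val).pow 2
  exact (h1.pow 2).div h2 (fun w => pow_ne_zero 2 (norm_ne_zero_iff.mpr w.2))

lemma continuous_rho (i j : Fin d) : Continuous (rho i j) := by
  apply Continuous.quotient_lift
  have h1 : Continuous fun w : { v : Ed d // v ≠ 0 } => w.1 i :=
    (EuclideanSpace.proj i).continuous.comp continuous_subtype_val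
  have h1' : Continuous fun w : { v : Ed d // v ≠ 0 } => w.1 j :=
    (EuclideanSpace.proj j).continuous.comp continuous_subtype_val
  have h2 : Continuous fun w : { v : Ed d // v ≠ 0 } => ‖w.1‖^2 :=
    (continuous_norm.comp continuous_subtype_val).pow 2
  exact (h1.mul h1').div h2 (fun w => pow_ne_zero 2 (norm_ne_zero_iff.mpr w.2))

lemma coordSq_mk (i : Fin d) (v : Ed d) (hv : v ≠ 0) :
    coordSq i (Projectivization.mk ℝ v hv) = (v i)^2 / ‖v‖^2 := rfl

lemma rho_mk (i j : Fin d) (v : Ed d) (hv : v ≠ 0) :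
    rho i j (Projectivization.mk ℝ v hv) = (v i * v j) / ‖v‖^2 := rfl

/-- the open set of lines with nonzero `i`-th coordinate -/
def Bset (i : Fin d) : Set (PSp d) := coordSq i ⁻¹' Set.Ioi 0

lemma isOpen_Bset (i : Fin d) : IsOpen (Bset i) := (continuous_coordSq i).isOpen_preimage _ isOpen_Ioi

lemma mem_Bset_iff (i : Fin d) (v : Ed d) (hv : v ≠ 0) :
    Projectivization.mk ℝ v hv ∈ Bset i ↔ v i ≠ 0 := by
  have hvn : ‖v‖ ≠ 0 := norm_ne_zero_iff.mpr hv
  simp only [Bset, Set.mem_preimage, coordSq_mk, Set.mem_Ioi]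
  constructor
  · intro h hvi; rw [hvi] at h; simp at h
  · intro h; positivity

lemma univ_subset_iUnion_Bset : (Set.univ : Set (PSp d)) ⊆ ⋃ i, Bset i := by
  intro x _
  induction x using Projectivization.ind with
  | h v hv =>
    have : ∃ i, v i ≠ 0 := by
      by_contra h
      push_neg at h
      exact hv (by ext i; exact h i)
    obtain ⟨i, hi⟩ := this
    exact Set.mem_iUnion.mpr ⟨i, (mem_Bset_iff i v hv).mpr hi⟩


/-- hyperbolic diagonal matrix with `a` at `i`, `a⁻¹` at `j`, `1` elsewhere -/
def Dmat (i j : Fin d) (a : ℝ) : Matrix (Fin d) (Fin d) ℝ :=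
  Matrix.diagonal (fun k => if k = i then a else if k = j then a⁻¹ else 1)

lemma Dmat_det (i j : Fin d) (hij : i ≠ j) {a : ℝ} (ha : a ≠ 0) : (Dmat i j a).det = 1 := by
  classical
  rw [Dmat, Matrix.det_diagonal]
  rw [← Finset.mul_prod_erase _ _ (Finset.mem_univ i)]
  rw [← Finset.mul_prod_erase _ _ (Finset.mem_erase.mpr ⟨hij.symm, Finset.mem_univ j⟩)]
  rw [if_pos rfl, if_neg hij.symm, if_pos rfl]
  rw [Finset.prod_eq_one]
  · field_simp
  · intro k hk
    simp only [Finset.mem_erase] at hk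
    rw [if_neg hk.2.1, if_neg hk.1]

lemma L_diagonal_apply (c : Fin d → ℝ) (v : Ed d) (k : Fin d) :
    Matrix.toEuclideanLin (Matrix.diagonal c) v k = c k * v k := by
  simp [Matrix.toEuclideanLin_apply, Matrix.mulVec_diagonal]

lemma tendsto_iterate_pt (i j : Fin d) (hij : i ≠ j) (a : ℝ) (ha : 1 < a)
    (x : PSp d) (hx : x ∈ Bset i) :
    Filter.Tendsto (fun n => (projAct (Dmat i j a))^[n] x) Filter.atTop (𝓝 (pt i)) := by
  have ha0 : a ≠ 0 := by positivity
  have hdet := Dmat_det i j hij ha0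
  set c : Fin d → ℝ := fun k => if k = i then a else if k = j then a⁻¹ else 1 with hc
  induction x using Projectivization.ind with
  | h v hv =>
    have hvi : v i ≠ 0 := (mem_Bset_iff i v hv).mp hx
    set u : ℕ → Ed d := fun n => (WithLp.equiv 2 (Fin d → ℝ)).symm
      (fun k => (c k * a⁻¹)^n * v k) with hu
    have hu_apply : ∀ n k, u n k = (c k * a⁻¹)^n * v k := fun n k => rfl
    have hu_ne : ∀ n, u n ≠ 0 := by
      intro n h
      apply hvi
      have := congrFun (congrArg (fun w : Ed d => (w : Fin d → ℝ)) h) i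
      simp only [hu_apply] at this
      have hci : c i = a := if_pos rfl
      rw [hci] at this
      simpa [mul_inv_cancel₀ ha0, one_pow] using this
    -- iterate formula
    have hiter : ∀ n, (projAct (Dmat i j a))^[n] (Projectivization.mk ℝ v hv)
        = Projectivization.mk ℝ (u n) (hu_ne n) := by
      intro n
      induction n with
      | zero =>
        simp only [Function.iterate_zero, id_eq]
        rw [Projectivization.mk_eq_mk_iff']
        exact ⟨1, by ext k; simp [hu_apply]⟩
      | succ n ih =>
        rw [Function.iterate_succ_apply', ih, projAct_mk hdet,
          Projectivization.mk_eq_mk_iff']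
        refine ⟨a, ?_⟩
        ext k
        have hL := L_diagonal_apply c (u n) k
        simp only [Dmat] at *
        rw [PiLp.smul_apply, hL, hu_apply, hu_apply, smul_eq_mul]
        field_simp
        have hainv : a * a⁻¹ = 1 := mul_inv_cancel₀ ha0
        linear_combination (c k * c k ^ n * a⁻¹ ^ n * v k) * hainv
    -- the limit vector
    have hlimvec : Filter.Tendsto u Filter.atTop
        (𝓝 ((EuclideanSpace.single i (v i) : Ed d))) := by
      rw [(PiLp.homeomorph 2 (fun _ : Fin d => ℝ)).isInducing.tendsto_nhds_iff, tendsto_pi_nhds]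
      intro k
      show Filter.Tendsto (fun n => u n k) Filter.atTop (𝓝 ((EuclideanSpace.single i (v i) : Ed d) k))
      by_cases hk : k = i
      · subst hk
        have : ∀ n, u n k = v k := by
          intro n; rw [hu_apply]; simp [hc, mul_inv_cancel₀ ha0]
        simp only [this]
        have : (EuclideanSpace.single k (v k) : Ed d) k = v k := by
          simp [EuclideanSpace.single_apply]
        rw [this]
        exact tendsto_const_nhds
      · have hr0 : 0 ≤ c k * a⁻¹ := by
          have : 0 < a⁻¹ := by positivity
          rcases eq_or_ne k j with rfl | hkj
          · simp only [hc, if_neg hk, if_pos rfl]; positivity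
          · simp only [hc, if_neg hk, if_neg hkj]; positivity
        have hr1 : c k * a⁻¹ < 1 := by
          have h1 : a⁻¹ < 1 := by
            rw [inv_lt_one_iff₀]; right; exact ha
          have h2 : 0 < a⁻¹ := by positivity
          rcases eq_or_ne k j with rfl | hkj
          · simp only [hc, if_neg hk, if_pos rfl]
            calc a⁻¹ * a⁻¹ < 1 * 1 := by
                  apply mul_lt_mul' (le_of_lt h1) h1 (le_of_lt h2) one_pos
              _ = 1 := by ring
          · simp only [hc, if_neg hk, if_neg hkj, one_mul]; exact h1
        have : (EuclideanSpace.single i (v i) : Ed d) k = 0 := by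
          simp [EuclideanSpace.single_apply, hk]
        rw [this]
        simp only [hu_apply]
        have := (tendsto_pow_atTop_nhds_zero_of_lt_one hr0 hr1).mul_const (v k)
        simpa using this
    -- conclude via continuity of the quotient map
    have hsub : Filter.Tendsto (fun n => (⟨u n, hu_ne n⟩ : {w : Ed d // w ≠ 0}))
        Filter.atTop (𝓝 ⟨EuclideanSpace.single i (v i), by
          intro h
          have := congrFun (congrArg (fun w : Ed d => (w : Fin d → ℝ)) h) i
          simp [EuclideanSpace.single_apply] at this
          exact hvi this⟩) := by
      rw [tendsto_subtype_rng]
      exact hlimvec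
    have hq := ((continuous_quotient_mk' (s := projectivizationSetoid ℝ (Ed d))).tendsto _).comp hsub
    simp only [hiter]
    have hpt : (Quotient.mk' (s := projectivizationSetoid ℝ (Ed d)) (⟨EuclideanSpace.single i (v i), by
          intro h
          have := congrFun (congrArg (fun w : Ed d => (w : Fin d → ℝ)) h) i
          simp [EuclideanSpace.single_apply] at this
          exact hvi this⟩ : {w : Ed d // w ≠ 0}) : PSp d) = pt i := by
      show Projectivization.mk ℝ _ _ = pt i
      rw [pt, Projectivization.mk_eq_mk_iff']
      refine ⟨v i, ?_⟩
      ext k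
      simp only [PiLp.smul_apply, EuclideanSpace.single_apply, smul_eq_mul]
      split <;> simp
    rw [hpt] at hq
    exact hq

lemma keydyn (μ : Measure (PSp d)) [IsFiniteMeasure μ] {φ : PSp d → PSp d}
    (hφc : Continuous φ) (hφinv : Measure.map φ μ = μ) {i : Fin d}
    (hlim : ∀ x ∈ Bset i, Filter.Tendsto (fun n => φ^[n] x) Filter.atTop (𝓝 (pt i)))
    {W : Set (PSp d)} (hW : IsOpen W) (hiW : pt i ∈ W) : μ (Bset i) ≤ μ W := by
  have hφm : Measurable φ := hφc.measurable
  have hmap : ∀ n, Measure.map (φ^[n]) μ = μ := by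
    intro n
    induction n with
    | zero => simp
    | succ n ih =>
      rw [Function.iterate_succ]
      rw [← Measure.map_map (hφm.iterate n) hφm, hφinv, ih]
  set T : ℕ → Set (PSp d) := fun N => ⋂ (n) (_ : N ≤ n), (φ^[n]) ⁻¹' W with hT
  have hmono : Monotone T := by
    intro N M hNM x hx
    simp only [hT, Set.mem_iInter] at hx ⊢
    intro n hn
    exact hx n (le_trans hNM hn)
  have hsub : Bset i ⊆ ⋃ N, T N := by
    intro x hx
    have := (hlim x hx).eventually (hW.eventually_mem hiW)
    rw [Filter.eventually_atTop] at this
    obtain ⟨N, hN⟩ := this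
    refine Set.mem_iUnion.mpr ⟨N, ?_⟩
    simp only [hT, Set.mem_iInter]
    exact fun n hn => hN n hn
  calc μ (Bset i) ≤ μ (⋃ N, T N) := measure_mono hsub
    _ = ⨆ N, μ (T N) := hmono.measure_iUnion
    _ ≤ μ W := by
      refine iSup_le fun N => ?_
      have h1 : T N ⊆ (φ^[N]) ⁻¹' W := by
        intro x hx
        simp only [hT, Set.mem_iInter] at hx
        exact hx N le_rfl
      have h2 : μ ((φ^[N]) ⁻¹' W) = μ W := by
        conv_rhs => rw [← hmap N]
        rw [Measure.map_apply (hφm.iterate N) hW.measurableSet]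
      exact le_trans (measure_mono h1) (le_of_eq h2)


section Shear

lemma shear_det (i j : Fin d) (hij : j ≠ i) (t : ℝ) :
    (Matrix.transvection j i t).det = 1 := Matrix.det_transvection_of_ne j i hij t

lemma L_transvection_apply (i j : Fin d) (t : ℝ) (v : Ed d) (k : Fin d) :
    Matrix.toEuclideanLin (Matrix.transvection j i t) v k
      = v k + (if k = j then t * v i else 0) := by
  simp only [Matrix.toEuclideanLin_apply, Matrix.transvection, Matrix.add_mulVec,
    Matrix.one_mulVec]
  have h1 : ∀ (w : Fin d → ℝ) (m : Fin d), ((WithLp.equiv 2 (Fin d → ℝ)).symm w) m = w m :=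
    fun _ _ => rfl
  simp only [Pi.add_apply]
  have h2 : (WithLp.equiv 2 (Fin d → ℝ)) v = fun m => v m := rfl
  have : (Matrix.single j i t).mulVec (fun m => v m) k
      = if k = j then t * v i else 0 := by
    simp [Matrix.mulVec, Matrix.single, dotProduct, ite_and,
      Finset.sum_ite_eq, eq_comm]
  simp [h2, this, Pi.add_apply]

/-- representative vectors of the shear orbit of `[e_i]` -/
def qv (i j : Fin d) (t : ℝ) (k : ℕ) : Ed d :=
  (WithLp.equiv 2 (Fin d → ℝ)).symm (fun m => if m = i then 1 else if m = j then k * t else 0)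

lemma qv_apply (i j : Fin d) (t : ℝ) (k : ℕ) (m : Fin d) :
    qv i j t k m = if m = i then 1 else if m = j then k * t else 0 := rfl

lemma qv_ne_zero (i j : Fin d) (t : ℝ) (k : ℕ) : qv i j t k ≠ 0 := by
  intro h
  have := congrFun (congrArg (fun w : Ed d => (w : Fin d → ℝ)) h) i
  simp [qv_apply] at this

lemma qv_normsq (i j : Fin d) (hij : j ≠ i) (t : ℝ) (k : ℕ) :
    ‖qv i j t k‖^2 = 1 + (k*t)^2 := by
  rw [EuclideanSpace.norm_eq, Real.sq_sqrt (by positivity)]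
  have : ∀ m : Fin d, ‖qv i j t k m‖^2
      = (if m = i then (1:ℝ) else 0) + (if m = j then (k*t)^2 else 0) := by
    intro m
    by_cases hmi : m = i
    · simp [qv_apply, hmi, Ne.symm hij]
    · by_cases hmj : m = j
      · simp [qv_apply, hmi, hmj, hij, Real.norm_eq_abs, mul_pow, sq_abs]
      · simp [qv_apply, hmi, hmj]
  rw [Finset.sum_congr rfl (fun m _ => this m), Finset.sum_add_distrib,
    Finset.sum_ite_eq' Finset.univ i, Finset.sum_ite_eq' Finset.univ j]
  simp

lemma rho_qv (i j : Fin d) (hij : j ≠ i) (t : ℝ) (k : ℕ) :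
    rho i j (Projectivization.mk ℝ (qv i j t k) (qv_ne_zero i j t k))
    = (k*t) / (1 + (k*t)^2) := by
  rw [rho_mk, qv_normsq i j hij]
  simp [qv_apply, hij]

lemma iterate_shear_pt (i j : Fin d) (hij : j ≠ i) (t : ℝ) (k : ℕ) :
    (projAct (Matrix.transvection j i t))^[k] (pt i)
      = Projectivization.mk ℝ (qv i j t k) (qv_ne_zero i j t k) := by
  have hdet := shear_det i j hij t
  induction k with
  | zero =>
    simp only [Function.iterate_zero, id_eq]
    rw [pt, Projectivization.mk_eq_mk_iff']
    refine ⟨1, ?_⟩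
    ext m
    by_cases hmi : m = i
    · simp [qv_apply, hmi, EuclideanSpace.single_apply, Ne.symm hij]
    · simp [qv_apply, hmi, EuclideanSpace.single_apply]
  | succ k ih =>
    rw [Function.iterate_succ_apply', ih, projAct_mk hdet, Projectivization.mk_eq_mk_iff']
    refine ⟨1, ?_⟩
    ext m
    rw [one_smul, L_transvection_apply i j t]
    by_cases hmi : m = i
    · simp [qv_apply, hmi, Ne.symm hij]
    · by_cases hmj : m = j
      · simp only [qv_apply, if_neg hmi, if_pos hmj, Nat.cast_succ]
        push_cast
        ring
      · simp [qv_apply, hmi, hmj]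

/-- elementary gap estimate for `s ↦ s/(1+s²)` on `[0, 1/2]` -/
lemma gap_lemma {x y : ℝ} (hx : 0 ≤ x) (hxy : x ≤ y) (hy : y ≤ 1/2) :
    (y - x)/3 ≤ y/(1+y^2) - x/(1+x^2) := by
  have h1 : (0:ℝ) < 1 + x^2 := by positivity
  have h2 : (0:ℝ) < 1 + y^2 := by positivity
  rw [div_sub_div _ _ (ne_of_gt h2) (ne_of_gt h1), div_le_div_iff₀ (by norm_num) (by positivity)]
  have hyx : 0 ≤ y - x := sub_nonneg.2 hxy
  have hy0 : 0 ≤ y := le_trans hx hxy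
  have hxy4 : x*y ≤ 1/4 := by nlinarith
  have hxy0 : 0 ≤ x*y := mul_nonneg hx hy0
  have hx2 : x^2 ≤ 1/4 := by nlinarith
  have hy2 : y^2 ≤ 1/4 := by nlinarith
  have hx2y2 : x^2*y^2 ≤ 1/16 := by nlinarith
  have h5 : (1+y^2)*(1+x^2) ≤ 3*(1-x*y) := by nlinarith
  calc (y-x) * ((1+y^2)*(1+x^2)) ≤ (y-x)*(3*(1-x*y)) := mul_le_mul_of_nonneg_left h5 hyx
    _ = (y*(1+x^2) - (1+y^2)*x)*3 := by ring

end Shear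


lemma map_iterate_apply {μ : Measure (PSp d)} {φ : PSp d → PSp d} (hφm : Measurable φ)
    (hinv : Measure.map φ μ = μ) (k : ℕ) {s : Set (PSp d)} (hs : MeasurableSet s) :
    μ ((φ^[k]) ⁻¹' s) = μ s := by
  have hmap : ∀ n, Measure.map (φ^[n]) μ = μ := by
    intro n
    induction n with
    | zero => simp
    | succ n ih =>
      rw [Function.iterate_succ, ← Measure.map_map (hφm.iterate n) hφm, hinv, ih]
  rw [← Measure.map_apply (hφm.iterate k) hs, hmap k]

lemma exists_small {f : ℝ → ℝ} (hf : ContinuousAt f 0) (hf0 : f 0 = 0) {ε δ : ℝ}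
    (hε : 0 < ε) (hδ : 0 < δ) : ∃ s : ℝ, 0 < s ∧ s < δ ∧ f s < ε := by
  have hev : ∀ᶠ y in 𝓝 (0:ℝ), f y < ε := by
    have : f 0 < ε := by rw [hf0]; exact hε
    exact hf.eventually_lt continuousAt_const this
  rw [Metric.eventually_nhds_iff] at hev
  obtain ⟨r, hr, h⟩ := hev
  refine ⟨min (r/2) (δ/2), by positivity, ?_, ?_⟩
  · calc min (r/2) (δ/2) ≤ δ/2 := min_le_right _ _
      _ < δ := by linarith
  · apply h
    rw [Real.dist_eq]
    have h1 : min (r/2) (δ/2) ≤ r/2 := min_le_left _ _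
    have h2 : (0:ℝ) < min (r/2) (δ/2) := by positivity
    rw [sub_zero, abs_of_pos h2]
    exact lt_of_le_of_lt h1 (by linarith)

lemma contAt_dmat (i j : Fin d) (A₀ : Matrix (Fin d) (Fin d) ℝ) :
    ContinuousAt (fun s : ℝ => ‖Dmat i j (1+s) * A₀ - A₀‖) 0 := by
  have hM : ContinuousAt (fun s : ℝ => Dmat i j (1+s)) 0 := by
    apply continuousAt_pi.2; intro k; apply continuousAt_pi.2; intro l
    simp only [Dmat, Matrix.diagonal_apply]
    by_cases hkl : k = l
    · simp only [if_pos hkl]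
      by_cases hki : k = i
      · simp only [if_pos hki]
        exact continuousAt_const.add continuousAt_id
      · simp only [if_neg hki]
        by_cases hkj : k = j
        · simp only [if_pos hkj]
          exact ContinuousAt.inv₀ (continuousAt_const.add continuousAt_id) (by norm_num)
        · simp only [if_neg hkj]; exact continuousAt_const
    · simp only [if_neg hkl]; exact continuousAt_const
  have h1 : Continuous (fun X : Matrix (Fin d) (Fin d) ℝ => X * A₀ - A₀) :=
    (continuous_id.matrix_mul continuous_const).sub continuous_const
  have houter : Continuous (fun X : Matrix (Fin d) (Fin d) ℝ => ‖X * A₀ - A₀‖) := h1.norm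
  exact houter.continuousAt.comp hM

lemma contAt_shear (i j : Fin d) (A₀ : Matrix (Fin d) (Fin d) ℝ) :
    ContinuousAt (fun t : ℝ => ‖Matrix.transvection j i t * A₀ - A₀‖) 0 := by
  have hM : ContinuousAt (fun t : ℝ => Matrix.transvection j i t) 0 := by
    apply continuousAt_pi.2; intro k; apply continuousAt_pi.2; intro l
    simp only [Matrix.transvection, Matrix.add_apply, Matrix.single, Matrix.of_apply]
    by_cases hkl : j = k ∧ i = l
    · simp only [if_pos hkl]
      exact continuousAt_const.add continuousAt_id
    · simp only [if_neg hkl]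
      exact continuousAt_const.add continuousAt_const
  have h1 : Continuous (fun X : Matrix (Fin d) (Fin d) ℝ => X * A₀ - A₀) :=
    (continuous_id.matrix_mul continuous_const).sub continuous_const
  have houter : Continuous (fun X : Matrix (Fin d) (Fin d) ℝ => ‖X * A₀ - A₀‖) := h1.norm
  exact houter.continuousAt.comp hM

lemma dmat_one (i j : Fin d) : Dmat i j (1+0) = (1 : Matrix (Fin d) (Fin d) ℝ) := by
  have : (fun k : Fin d => if k = i then (1:ℝ)+0 else if k = j then ((1:ℝ)+0)⁻¹ else 1)
      = fun _ => (1:ℝ) := by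
    funext k; split_ifs <;> norm_num
  rw [Dmat, this, Matrix.diagonal_one]

end Stmt9

open Stmt9

set_option maxHeartbeats 2000000

/-- for Borel probability measures `ν, ν'` on `P^{d-1}` (`d ≥ 2`), the
set of matrices in `SL_d(ℝ)` pushing `ν` forward to `ν'` has empty interior in
`SL_d(ℝ)`. -/
theorem statement9 {d : ℕ} (hd : 2 ≤ d) (ν ν' : Measure (PSp d))
    [IsProbabilityMeasure ν] [IsProbabilityMeasure ν'] :
    interior {A : {B : Matrix (Fin d) (Fin d) ℝ // B.det = 1} |
      Measure.map (projAct A.1) ν = ν'} = ∅ := by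
  by_contra hne
  rw [← Ne, ← Set.nonempty_iff_ne_empty] at hne
  obtain ⟨A₀, hA₀mem⟩ := hne
  rw [mem_interior_iff_mem_nhds] at hA₀mem
  obtain ⟨ε, hε, hball⟩ := Metric.mem_nhds_iff.mp hA₀mem
  have ha₀det : (A₀ : Matrix (Fin d) (Fin d) ℝ).det = 1 := A₀.2
  set a₀ : Matrix (Fin d) (Fin d) ℝ := A₀.1 with ha₀
  have hA₀ : Measure.map (projAct a₀) ν = ν' := hball (Metric.mem_ball_self hε)
  -- stabilizer of ν' contains all determinant-one matrices near 1
  have stab : ∀ g : Matrix (Fin d) (Fin d) ℝ, g.det = 1 → ‖g * a₀ - a₀‖ < ε →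
      Measure.map (projAct g) ν' = ν' := by
    intro g hg hlt
    have hdet : (g * a₀).det = 1 := by rw [Matrix.det_mul, hg, ha₀det, one_mul]
    have hmem : (⟨g * a₀, hdet⟩ : {B : Matrix (Fin d) (Fin d) ℝ // B.det = 1})
        ∈ Metric.ball A₀ ε := by
      rw [Metric.mem_ball, Subtype.dist_eq, dist_eq_norm]
      exact hlt
    have h2 := hball hmem
    simp only [Set.mem_setOf_eq] at h2
    calc Measure.map (projAct g) ν' = Measure.map (projAct g) (Measure.map (projAct a₀) ν) := by
          rw [hA₀]
      _ = Measure.map (projAct g ∘ projAct a₀) ν :=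
          Measure.map_map (measurable_projAct hg) (measurable_projAct ha₀det)
      _ = Measure.map (projAct (g * a₀)) ν := by rw [← projAct_mul hg ha₀det]
      _ = ν' := h2
  have hd0 : (d:ℝ≥0∞) ≠ 0 := by
    simp only [ne_eq, Nat.cast_eq_zero]; omega
  have hdtop : (d:ℝ≥0∞) ≠ ⊤ := ENNReal.natCast_ne_top d
  -- pigeonhole: some coordinate set has measure at least 1/d
  have hpigeon : ∃ i : Fin d, (d:ℝ≥0∞)⁻¹ ≤ ν' (Bset i) := by
    have h1 : (1:ℝ≥0∞) ≤ ∑ i : Fin d, ν' (Bset i) := by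
      calc (1:ℝ≥0∞) = ν' Set.univ := (measure_univ).symm
        _ ≤ ν' (⋃ i, Bset i) := measure_mono univ_subset_iUnion_Bset
        _ ≤ ∑' i : Fin d, ν' (Bset i) := measure_iUnion_le _
        _ = ∑ i : Fin d, ν' (Bset i) := tsum_fintype _
    haveI : Nonempty (Fin d) := ⟨⟨0, by omega⟩⟩
    obtain ⟨i, _, hmax⟩ := Finset.exists_max_image Finset.univ (fun i => ν' (Bset i))
      ⟨⟨0, by omega⟩, Finset.mem_univ _⟩
    refine ⟨i, ?_⟩
    have h2 : ∑ k : Fin d, ν' (Bset k) ≤ (Finset.univ : Finset (Fin d)).card • ν' (Bset i) :=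
      Finset.sum_le_card_nsmul _ _ _ (fun k hk => hmax k hk)
    rw [Finset.card_univ, Fintype.card_fin, nsmul_eq_mul] at h2
    have h3 : (1:ℝ≥0∞) ≤ (d:ℝ≥0∞) * ν' (Bset i) := le_trans h1 h2
    calc (d:ℝ≥0∞)⁻¹ = (d:ℝ≥0∞)⁻¹ * 1 := (mul_one _).symm
      _ ≤ (d:ℝ≥0∞)⁻¹ * ((d:ℝ≥0∞) * ν' (Bset i)) := mul_le_mul_right h3 _
      _ = ν' (Bset i) := by rw [← mul_assoc, ENNReal.inv_mul_cancel hd0 hdtop, one_mul]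
  obtain ⟨i, hi⟩ := hpigeon
  haveI : Nontrivial (Fin d) := ⟨⟨⟨0, by omega⟩, ⟨1, by omega⟩, by simp [Fin.ext_iff]⟩⟩
  obtain ⟨j, hj⟩ := exists_ne i
  -- invariance under a hyperbolic diagonal matrix
  obtain ⟨s, hs0, _, hsball⟩ := exists_small (contAt_dmat i j a₀)
    (by rw [dmat_one i j, one_mul, sub_self, norm_zero]) hε one_pos
  have hadet : (Dmat i j (1+s)).det = 1 := Dmat_det i j (Ne.symm hj) (by linarith)
  have hdinv : Measure.map (projAct (Dmat i j (1+s))) ν' = ν' := stab _ hadet hsball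
  -- invariance under a small shear
  have h2d : (0:ℝ) < 1/(2*(d:ℝ)) := by
    have : (0:ℝ) < (d:ℝ) := by exact_mod_cast (by omega : 0 < d)
    positivity
  obtain ⟨t, ht0, htδ, htball⟩ := exists_small (contAt_shear i j a₀)
    (by rw [Matrix.transvection, Matrix.single_zero, add_zero, one_mul,
      sub_self, norm_zero]) hε h2d
  have htdet := shear_det i j hj t
  have hsinv : Measure.map (projAct (Matrix.transvection j i t)) ν' = ν' := stab _ htdet htball
  set ψ : PSp d → PSp d := projAct (Matrix.transvection j i t) with hψ
  have hψc : Continuous ψ := continuous_projAct htdet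
  -- the disjoint open sets
  set ρk : ℕ → ℝ := fun k => (k*t)/(1+(k*t)^2) with hρk
  set U : ℕ → Set (PSp d) := fun k => rho i j ⁻¹' Set.Ioo (ρk k - t/7) (ρk k + t/7) with hU
  have hUopen : ∀ k, IsOpen (U k) := fun k =>
    (continuous_rho i j).isOpen_preimage _ isOpen_Ioo
  have hUmem : ∀ k : ℕ, ψ^[k] (pt i) ∈ U k := by
    intro k
    rw [hψ, iterate_shear_pt i j hj t k]
    simp only [hU, Set.mem_preimage, rho_qv i j hj t k]
    constructor <;> [skip; skip] <;> simp only [hρk] <;> linarith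
  have hρmono : ∀ k l : ℕ, k < l → l ≤ d → ρk k + t/3 ≤ ρk l := by
    intro k l hkl hld
    have hkt : (0:ℝ) ≤ k*t := by positivity
    have hlt : (k:ℝ)*t ≤ l*t := by
      have : (k:ℝ) ≤ l := by exact_mod_cast le_of_lt hkl
      nlinarith
    have hl2 : (l:ℝ)*t ≤ 1/2 := by
      have h1 : (l:ℝ) ≤ d := by exact_mod_cast hld
      have h2 : (l:ℝ)*t ≤ (d:ℝ)*t := by nlinarith [le_of_lt ht0]
      have h3 : (d:ℝ)*t < (d:ℝ)*(1/(2*(d:ℝ))) := by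
        apply mul_lt_mul_of_pos_left htδ
        exact_mod_cast (by omega : 0 < d)
      have h4 : (d:ℝ)*(1/(2*(d:ℝ))) = 1/2 := by
        field_simp
      linarith
    have := gap_lemma hkt hlt hl2
    have hts : t ≤ (l:ℝ)*t - k*t := by
      have : (k:ℝ) + 1 ≤ l := by exact_mod_cast hkl
      nlinarith
    simp only [hρk]
    linarith [this]
  have hUdisj : ∀ k l : ℕ, k ≤ d → l ≤ d → k ≠ l → Disjoint (U k) (U l) := by
    have key : ∀ k l : ℕ, k < l → l ≤ d → Disjoint (U k) (U l) := by
      intro k l hkl hld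
      rw [Set.disjoint_left]
      intro x hxk hxl
      simp only [hU, Set.mem_preimage, Set.mem_Ioo] at hxk hxl
      have := hρmono k l hkl hld
      linarith [hxk.2, hxl.1]
    intro k l hk hl hkl
    rcases lt_or_gt_of_ne hkl with h | h
    · exact key k l h hl
    · exact (key l k h hk).symm
  -- each U k has measure at least 1/d
  have hkey : ∀ k : ℕ, (d:ℝ≥0∞)⁻¹ ≤ ν' (U k) := by
    intro k
    have hWopen : IsOpen ((ψ^[k]) ⁻¹' (U k)) :=
      (hUopen k).preimage (hψc.iterate k)
    have hWmem : pt i ∈ (ψ^[k]) ⁻¹' (U k) := hUmem k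
    have hlim : ∀ x ∈ Bset i, Filter.Tendsto
        (fun n => (projAct (Dmat i j (1+s)))^[n] x) Filter.atTop (𝓝 (pt i)) :=
      fun x hx => tendsto_iterate_pt i j (Ne.symm hj) (1+s) (by linarith) x hx
    have h1 : ν' (Bset i) ≤ ν' ((ψ^[k]) ⁻¹' (U k)) :=
      keydyn ν' (continuous_projAct hadet) hdinv hlim hWopen hWmem
    have h2 : ν' ((ψ^[k]) ⁻¹' (U k)) = ν' (U k) :=
      map_iterate_apply hψc.measurable hsinv k (hUopen k).measurableSet
    exact le_trans hi (h1.trans_eq h2)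
  -- summing up gives a contradiction
  have hsum : ∑ k ∈ Finset.range (d+1), ν' (U k) ≤ 1 := by
    rw [← measure_biUnion_finset ?hd (fun k _ => (hUopen k).measurableSet)]
    · exact le_trans (measure_mono (Set.subset_univ _)) (le_of_eq measure_univ)
    case hd =>
      intro k hk l hl hkl
      exact hUdisj k l (by simp at hk; omega) (by simp at hl; omega) hkl
  have hlower : ((d:ℝ≥0∞)+1) * (d:ℝ≥0∞)⁻¹ ≤ ∑ k ∈ Finset.range (d+1), ν' (U k) := by
    calc ((d:ℝ≥0∞)+1) * (d:ℝ≥0∞)⁻¹ = ∑ _k ∈ Finset.range (d+1), (d:ℝ≥0∞)⁻¹ := by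
          rw [Finset.sum_const, Finset.card_range, nsmul_eq_mul]
          push_cast
          ring
      _ ≤ ∑ k ∈ Finset.range (d+1), ν' (U k) := Finset.sum_le_sum (fun k _ => hkey k)
  have hfinal : ((d:ℝ≥0∞)+1) * (d:ℝ≥0∞)⁻¹ ≤ (d:ℝ≥0∞) * (d:ℝ≥0∞)⁻¹ := by
    rw [ENNReal.mul_inv_cancel hd0 hdtop]
    exact le_trans hlower hsum
  have hinv0 : (d:ℝ≥0∞)⁻¹ ≠ 0 := ENNReal.inv_ne_zero.mpr hdtop
  have hinvtop : (d:ℝ≥0∞)⁻¹ ≠ ⊤ := ENNReal.inv_ne_top.mpr hd0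
  have : (d:ℝ≥0∞)+1 ≤ (d:ℝ≥0∞) :=
    (ENNReal.mul_le_mul_iff_left hinv0 hinvtop).mp hfinal
  have : ((d+1:ℕ):ℝ≥0∞) ≤ ((d:ℕ):ℝ≥0∞) := by push_cast; exact this
  have := Nat.cast_le (α := ℝ≥0∞) |>.mp this
  omega


end
end

section
/- Let Z be a Polish space and let P be a Markov probability kernel on Z with the strong Feller property, i.e., for every bounded Borel measurable h : Z → ℝ, the function z ↦ ∫ h(y) P(z, dy) is continuous. Let μ be a Borel probability measure on Z invariant under P (that is, ∫ P(z, K) dμ(z) = μ(K) for all Borel K), and let K ⊆ Z be a Borel set with μ(K) = 1. Then P(z, K) = 1 for every z in the topological support of μ. -/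
open MeasureTheory Topology
open scoped NNReal ENNReal

noncomputable section

attribute [local instance] Matrix.normedAddCommGroup

/-- Topological support of a measure: points all of whose open neighborhoods have
positive measure. -/
def msupport {X : Type*} [TopologicalSpace X] [MeasurableSpace X] (ν : Measure X) : Set X :=
  {x | ∀ U : Set X, IsOpen U → x ∈ U → 0 < ν U}

/-- if a Markov kernel `P` on a Polish space has the strong Feller
property, `μ` is `P`-invariant, and `K` is Borel with `μ K = 1`, then `P(z, K) = 1` for
every `z` in the support of `μ`. -/
theorem statement10 {Z : Type*} [TopologicalSpace Z] [PolishSpace Z]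
    [MeasurableSpace Z] [BorelSpace Z]
    (P : ProbabilityTheory.Kernel Z Z) [ProbabilityTheory.IsMarkovKernel P]
    (hSF : ∀ h : Z → ℝ, Measurable h → (∃ C, ∀ z, |h z| ≤ C) →
      Continuous fun z => ∫ y, h y ∂(P z))
    (μ : Measure Z) [IsProbabilityMeasure μ]
    (hinv : μ.bind (fun z => P z) = μ)
    (K : Set Z) (hK : MeasurableSet K) (hK1 : μ K = 1) :
    ∀ z ∈ msupport μ, P z K = 1 := by
  -- the continuous function z ↦ (P z K).toReal
  have hcont : Continuous fun z => (P z K).toReal := by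
    have h := hSF (K.indicator fun _ => (1 : ℝ))
      ((measurable_const.indicator hK))
      ⟨1, fun z => by
        by_cases hz : z ∈ K <;> simp [Set.indicator, hz]⟩
    convert h using 1
    ext z
    rw [integral_indicator_const (1 : ℝ) hK]
    simp
    rfl
  -- a.e. P z K = 1
  have hle : ∀ z, P z K ≤ 1 := fun z => prob_le_one
  have hlint : ∫⁻ z, P z K ∂μ = 1 := by
    rw [← Measure.bind_apply hK P.measurable.aemeasurable, hinv, hK1]
  have hae : (fun z => P z K) =ᵐ[μ] fun _ => 1 := by
    refine ae_eq_of_ae_le_of_lintegral_le (ae_of_all _ hle) ?_ aemeasurable_const ?_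
    · rw [hlint]; exact ENNReal.one_ne_top
    · simp [hlint]
  -- the open set where P z K < 1 is null
  set U : Set Z := {z | (P z K).toReal < 1} with hU
  have hUopen : IsOpen U := isOpen_lt hcont continuous_const
  have hU0 : μ U = 0 := by
    refine measure_mono_null (fun z hz => ?_) (ae_iff.mp hae)
    simp only [hU, Set.mem_setOf_eq] at hz ⊢
    intro h1
    rw [h1] at hz
    simp at hz
  intro z hz
  by_contra hPz
  have hzU : z ∈ U := by
    have hlt : P z K < 1 := lt_of_le_of_ne (hle z) hPz
    simp only [hU, Set.mem_setOf_eq]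
    exact (ENNReal.toReal_lt_toReal (ne_top_of_lt hlt) ENNReal.one_ne_top).mpr hlt
  have := hz U hUopen hzU
  rw [hU0] at this
  exact lt_irrefl 0 this

end
end

section
/- For d = 2 let K₀ = {(0,1), (1,0), (1,1)} ⊆ ℤ², and for d = 3 let K₀ = {(1,0,0), (0,1,0), (0,0,1), (1,1,1)} ⊆ ℤ³. Then the set of rank-one matrices { γ kᵀ : k ∈ K₀, γ ∈ ℝ^d with γ·k = 0 } spans the space sl_d(ℝ) of traceless real d×d matrices; here γ kᵀ denotes the outer-product matrix with entries (γ kᵀ)_{ij} = γ_i k_j. -/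
open MeasureTheory Topology
open scoped NNReal ENNReal

noncomputable section

attribute [local instance] Matrix.normedAddCommGroup

/-- the rank-one traceless matrices `γ kᵀ` with `γ ⊥ k`, as `k` ranges
over `{(0,1), (1,0), (1,1)}` (for `d = 2`) resp. `{(1,0,0), (0,1,0), (0,0,1), (1,1,1)}`
(for `d = 3`), span the space `sl_d(ℝ)` of traceless matrices. -/
theorem statement16 :
    (Submodule.span ℝ {M : Matrix (Fin 2) (Fin 2) ℝ |
        ∃ k ∈ ({![0, 1], ![1, 0], ![1, 1]} : Set (Fin 2 → ℤ)), ∃ γ : Fin 2 → ℝ,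
          dotProduct γ (fun i => (k i : ℝ)) = 0 ∧
          M = Matrix.vecMulVec γ fun i => (k i : ℝ)} =
      LinearMap.ker (Matrix.traceLinearMap (Fin 2) ℝ ℝ)) ∧
    (Submodule.span ℝ {M : Matrix (Fin 3) (Fin 3) ℝ |
        ∃ k ∈ ({![1, 0, 0], ![0, 1, 0], ![0, 0, 1], ![1, 1, 1]} : Set (Fin 3 → ℤ)),
          ∃ γ : Fin 3 → ℝ,
          dotProduct γ (fun i => (k i : ℝ)) = 0 ∧
          M = Matrix.vecMulVec γ fun i => (k i : ℝ)} =
      LinearMap.ker (Matrix.traceLinearMap (Fin 3) ℝ ℝ)) := by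
  constructor
  · apply le_antisymm
    · rw [Submodule.span_le]
      rintro M ⟨k, hk, γ, hγ, rfl⟩
      simp only [SetLike.mem_coe, LinearMap.mem_ker, Matrix.traceLinearMap_apply]
      simpa [Matrix.trace, Matrix.vecMulVec_apply, dotProduct, Fin.sum_univ_two,
        mul_comm] using hγ
    · intro M hM
      simp only [LinearMap.mem_ker, Matrix.traceLinearMap_apply, Matrix.trace,
        Fin.sum_univ_two, Matrix.diag_apply] at hM
      have h1 : Matrix.vecMulVec ![(1:ℝ),0] (fun i => ((![0,1] : Fin 2 → ℤ) i : ℝ))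
          ∈ Submodule.span ℝ {M : Matrix (Fin 2) (Fin 2) ℝ |
        ∃ k ∈ ({![0, 1], ![1, 0], ![1, 1]} : Set (Fin 2 → ℤ)), ∃ γ : Fin 2 → ℝ,
          dotProduct γ (fun i => (k i : ℝ)) = 0 ∧
          M = Matrix.vecMulVec γ fun i => (k i : ℝ)} :=
        Submodule.subset_span ⟨![0,1], by simp, ![1,0],
          by simp [dotProduct, Fin.sum_univ_two], rfl⟩
      have h2 : Matrix.vecMulVec ![(0:ℝ),1] (fun i => ((![1,0] : Fin 2 → ℤ) i : ℝ))
          ∈ Submodule.span ℝ {M : Matrix (Fin 2) (Fin 2) ℝ |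
        ∃ k ∈ ({![0, 1], ![1, 0], ![1, 1]} : Set (Fin 2 → ℤ)), ∃ γ : Fin 2 → ℝ,
          dotProduct γ (fun i => (k i : ℝ)) = 0 ∧
          M = Matrix.vecMulVec γ fun i => (k i : ℝ)} :=
        Submodule.subset_span ⟨![1,0], by simp, ![0,1],
          by simp [dotProduct, Fin.sum_univ_two], rfl⟩
      have h3 : Matrix.vecMulVec ![(1:ℝ),-1] (fun i => ((![1,1] : Fin 2 → ℤ) i : ℝ))
          ∈ Submodule.span ℝ {M : Matrix (Fin 2) (Fin 2) ℝ |
        ∃ k ∈ ({![0, 1], ![1, 0], ![1, 1]} : Set (Fin 2 → ℤ)), ∃ γ : Fin 2 → ℝ,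
          dotProduct γ (fun i => (k i : ℝ)) = 0 ∧
          M = Matrix.vecMulVec γ fun i => (k i : ℝ)} :=
        Submodule.subset_span ⟨![1,1], by simp, ![1,-1],
          by simp [dotProduct, Fin.sum_univ_two], rfl⟩
      have key : M = (M 0 1 - M 0 0) • Matrix.vecMulVec ![(1:ℝ),0]
            (fun i => ((![0,1] : Fin 2 → ℤ) i : ℝ))
          + (M 1 0 + M 0 0) • Matrix.vecMulVec ![(0:ℝ),1]
            (fun i => ((![1,0] : Fin 2 → ℤ) i : ℝ))
          + (M 0 0) • Matrix.vecMulVec ![(1:ℝ),-1]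
            (fun i => ((![1,1] : Fin 2 → ℤ) i : ℝ)) := by
        ext i j
        fin_cases i <;> fin_cases j <;>
          simp only [Matrix.add_apply, Matrix.smul_apply, Matrix.vecMulVec_apply] <;>
            simp [Matrix.vecMulVec_apply, Matrix.add_apply, Matrix.smul_apply, Matrix.vecHead, Matrix.vecTail, Function.comp] <;> linarith
      rw [key]
      exact add_mem (add_mem (Submodule.smul_mem _ _ h1) (Submodule.smul_mem _ _ h2))
        (Submodule.smul_mem _ _ h3)
  · apply le_antisymm
    · rw [Submodule.span_le]
      rintro M ⟨k, hk, γ, hγ, rfl⟩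
      simp only [SetLike.mem_coe, LinearMap.mem_ker, Matrix.traceLinearMap_apply]
      simpa [Matrix.trace, Matrix.vecMulVec_apply, dotProduct, Fin.sum_univ_three,
        mul_comm] using hγ
    · intro M hM
      simp only [LinearMap.mem_ker, Matrix.traceLinearMap_apply, Matrix.trace,
        Fin.sum_univ_three, Matrix.diag_apply] at hM
      set S : Set (Matrix (Fin 3) (Fin 3) ℝ) := {M : Matrix (Fin 3) (Fin 3) ℝ |
        ∃ k ∈ ({![1, 0, 0], ![0, 1, 0], ![0, 0, 1], ![1, 1, 1]} : Set (Fin 3 → ℤ)),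
          ∃ γ : Fin 3 → ℝ,
          dotProduct γ (fun i => (k i : ℝ)) = 0 ∧
          M = Matrix.vecMulVec γ fun i => (k i : ℝ)} with hS
      have mem : ∀ (k : Fin 3 → ℤ) (γ : Fin 3 → ℝ),
          k ∈ ({![1, 0, 0], ![0, 1, 0], ![0, 0, 1], ![1, 1, 1]} : Set (Fin 3 → ℤ)) →
          dotProduct γ (fun i => (k i : ℝ)) = 0 →
          Matrix.vecMulVec γ (fun i => (k i : ℝ)) ∈ Submodule.span ℝ S := by
        intro k γ hk hγ
        exact Submodule.subset_span ⟨k, hk, γ, hγ, rfl⟩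
      have e01 := mem ![0,1,0] ![1,0,0] (by simp)
        (by simp [dotProduct, Fin.sum_univ_three])
      have e02 := mem ![0,0,1] ![1,0,0] (by simp)
        (by simp [dotProduct, Fin.sum_univ_three])
      have e10 := mem ![1,0,0] ![0,1,0] (by simp)
        (by simp [dotProduct, Fin.sum_univ_three])
      have e12 := mem ![0,0,1] ![0,1,0] (by simp)
        (by simp [dotProduct, Fin.sum_univ_three])
      have e20 := mem ![1,0,0] ![0,0,1] (by simp)
        (by simp [dotProduct, Fin.sum_univ_three])
      have e21 := mem ![0,1,0] ![0,0,1] (by simp)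
        (by simp [dotProduct, Fin.sum_univ_three])
      have eA := mem ![1,1,1] ![1,-1,0] (by simp)
        (by simp [dotProduct, Fin.sum_univ_three])
      have eB := mem ![1,1,1] ![0,1,-1] (by simp)
        (by simp [dotProduct, Fin.sum_univ_three])
      have key : M =
          (M 0 0) • Matrix.vecMulVec ![(1:ℝ),-1,0] (fun i => ((![1,1,1] : Fin 3 → ℤ) i : ℝ))
        + (-(M 2 2)) • Matrix.vecMulVec ![(0:ℝ),1,-1] (fun i => ((![1,1,1] : Fin 3 → ℤ) i : ℝ))
        + (M 0 1 - M 0 0) • Matrix.vecMulVec ![(1:ℝ),0,0] (fun i => ((![0,1,0] : Fin 3 → ℤ) i : ℝ))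
        + (M 0 2 - M 0 0) • Matrix.vecMulVec ![(1:ℝ),0,0] (fun i => ((![0,0,1] : Fin 3 → ℤ) i : ℝ))
        + (M 1 0 + M 0 0 + M 2 2) • Matrix.vecMulVec ![(0:ℝ),1,0] (fun i => ((![1,0,0] : Fin 3 → ℤ) i : ℝ))
        + (M 1 2 + M 0 0 + M 2 2) • Matrix.vecMulVec ![(0:ℝ),1,0] (fun i => ((![0,0,1] : Fin 3 → ℤ) i : ℝ))
        + (M 2 0 - M 2 2) • Matrix.vecMulVec ![(0:ℝ),0,1] (fun i => ((![1,0,0] : Fin 3 → ℤ) i : ℝ))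
        + (M 2 1 - M 2 2) • Matrix.vecMulVec ![(0:ℝ),0,1] (fun i => ((![0,1,0] : Fin 3 → ℤ) i : ℝ)) := by
        ext i j
        fin_cases i <;> fin_cases j <;>
          simp only [Matrix.add_apply, Matrix.smul_apply, Matrix.vecMulVec_apply] <;>
            simp [Matrix.vecMulVec_apply, Matrix.add_apply, Matrix.smul_apply, Matrix.vecHead, Matrix.vecTail, Function.comp] <;> linarith
      rw [key]
      exact add_mem (add_mem (add_mem (add_mem (add_mem (add_mem (add_mem
        (Submodule.smul_mem _ _ eA) (Submodule.smul_mem _ _ eB))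
        (Submodule.smul_mem _ _ e01)) (Submodule.smul_mem _ _ e02))
        (Submodule.smul_mem _ _ e10)) (Submodule.smul_mem _ _ e12))
        (Submodule.smul_mem _ _ e20)) (Submodule.smul_mem _ _ e21)

end
end
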